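/- arXiv:1605.01777 — 3 statements merged into one kernel-verified Lean document; each statement's English description precedes it below -/
import Mathlib

section
/- For any matroid M of positive rank, Σ_{F ∈ L} t^{rk F} χ_{M_F}(t^{-1}) χ_{M^F}(t) = 0, where the sum is over all flats F of M. -/
open Polynomial Set Matroid
open scoped Classical Matroid

/-- The rank of a set `X` in a matroid `M`: the largest cardinality of an
independent subset of `X`. -/
noncomputable def Matroid.rankOf {α : Type} (M : Matroid α) (X : Set α) : ℕ :=
  sSup {n | ∃ I ⊆ X, M.Indep I ∧ I.ncard = n}

/-- The rank of a matroid. -/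
noncomputable def Matroid.rank {α : Type} (M : Matroid α) : ℕ := M.rankOf M.E

/-- The characteristic polynomial of a matroid, via the Whitney rank formula
(equivalently, `χ_M(t) = ∑_{F ∈ L} μ(⊥, F) t^{rk M − rk F}`). -/
noncomputable def Matroid.charPoly {α : Type} [Fintype α] (M : Matroid α) : Polynomial ℤ :=
  ∑ A ∈ M.E.toFinset.powerset,
    (-1 : Polynomial ℤ) ^ A.card * (X : Polynomial ℤ) ^ (M.rank - M.rankOf ↑A)

/-- Contraction of a set in a matroid (the dual of a restriction of the dual).
For a flat `F`, `M.con F` is the restriction `M^F` of the paper, whose lattice of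
flats is `{G ∈ L : G ≥ F}`. -/
noncomputable def Matroid.con {α : Type} (M : Matroid α) (C : Set α) : Matroid α :=
  (M✶ ↾ (M.E \ C))✶

/-
Since `t^{rk F} χ_{M_F}(t⁻¹) = ∑_{A ⊆ F} (-1)^{|A|} t^{rk A}`, exchanging the order of summation
turns the sum into `∑_{A ⊆ E} (-1)^{|A|} t^{rk A} ∑_{F ⊇ A} χ_{M^F}(t)`. Grouping the subsets
`B ⊆ E \ F` of Whitney's formula for `χ_{M^F}` by the flat `cl(F ∪ B)` gives
`χ_{M^F}(t) = ∑_{K ≥ F} μ(F, K) t^{rk M - rk K}`, so the identity `∑_{G ≤ F ≤ K} μ(F, K) = δ_{G,K}`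
collapses the inner sum to `t^{rk M - rk A}`. What remains is `t^{rk M} ∑_{A ⊆ E} (-1)^{|A|}`,
which vanishes because `E` is nonempty.
-/

lemma Polynomial.reflect_sum {R ι : Type*} [Semiring R] (N : ℕ) (s : Finset ι) (f : ι → R[X]) :
    (∑ i ∈ s, f i).reflect N = ∑ i ∈ s, (f i).reflect N :=
  map_sum (⟨⟨reflect N, reflect_zero⟩, fun p q => reflect_add p q N⟩ : R[X] →+ R[X]) f s

lemma Finset.sum_powerset_neg_one_pow_card_of_ring {R ι : Type*} [Ring R] [DecidableEq ι]
    (s : Finset ι) : ∑ t ∈ s.powerset, (-1 : R) ^ t.card = if s = ∅ then 1 else 0 := by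
  have h := congrArg (Int.cast : ℤ → R) (Finset.sum_powerset_neg_one_pow_card (x := s))
  push_cast at h
  exact h

lemma IncidenceAlgebra.sum_filter_le_mu_left {𝕜 P : Type*} [Ring 𝕜] [PartialOrder P] [Fintype P]
    [LocallyFiniteOrder P] [DecidableEq P] [DecidableLE P] (a b : P) :
    ∑ x ∈ Finset.univ.filter (a ≤ ·), mu 𝕜 x b = if a = b then 1 else 0 := by
  rw [← sum_Icc_mu_left]
  refine (Finset.sum_subset (fun x hx => by simpa using (Finset.mem_Icc.1 hx).1) ?_).symm
  intro x hx hxI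
  exact apply_eq_zero_of_not_le (fun hxb => hxI (Finset.mem_Icc.2 ⟨by simpa using hx, hxb⟩)) _

namespace Matroid

variable {α : Type} {M : Matroid α} {H S R : Set α}

lemma cast_rankOf [M.RankFinite] (S : Set α) : (M.rankOf S : ℕ∞) = M.eRk S := by
  obtain ⟨I, hI⟩ := M.exists_isBasis' S
  have hIfin : I.Finite := hI.indep.finite
  suffices M.rankOf S = I.ncard by rw [this, hIfin.cast_ncard_eq, hI.eRk_eq_encard]
  refine IsGreatest.csSup_eq ⟨⟨I, hI.subset, hI.indep, rfl⟩, ?_⟩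
  rintro n ⟨J, hJS, hJ, rfl⟩
  have hle : J.encard ≤ I.encard := (hJ.encard_le_eRk_of_subset hJS).trans hI.eRk_eq_encard.le
  rwa [← hJ.finite.cast_ncard_eq, ← hIfin.cast_ncard_eq, Nat.cast_le] at hle

lemma rankOf_le_rank [M.RankFinite] (S : Set α) : M.rankOf S ≤ M.rank := by
  have h := M.eRk_le_eRank S
  rw [eRank_def, ← cast_rankOf, ← cast_rankOf] at h
  exact_mod_cast h

lemma rankOf_closure [M.RankFinite] (S : Set α) : M.rankOf (M.closure S) = M.rankOf S := by
  exact_mod_cast (cast_rankOf _).trans ((M.eRk_closure_eq S).trans (cast_rankOf S).symm)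

lemma rankOf_restrict [M.RankFinite] (hSR : S ⊆ R) : (M ↾ R).rankOf S = M.rankOf S := by
  exact_mod_cast (cast_rankOf _).trans ((M.restrict_eRk_eq hSR).trans (cast_rankOf S).symm)

lemma rank_restrict [M.RankFinite] (R : Set α) : (M ↾ R).rank = M.rankOf R :=
  rankOf_restrict subset_rfl

lemma ground_nonempty_of_rank_pos [M.RankFinite] (h : 0 < M.rank) : M.E.Nonempty := by
  rw [nonempty_iff_ne_empty]
  rintro hE
  have h0 : (M.rank : ℕ∞) = 0 := by rw [rank, cast_rankOf, hE, eRk_empty]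
  exact h.ne' (by exact_mod_cast h0)

lemma con_eq_contract (M : Matroid α) (C : Set α) : M.con C = M ／ C := rfl

lemma eRk_contract_add_eRk (M : Matroid α) (C S : Set α) :
    (M ／ C).eRk S + M.eRk C = M.eRk (S ∪ C) := by
  obtain ⟨J, hJ⟩ := M.exists_isBasis' C
  obtain ⟨I, hI, hJI⟩ :=
    hJ.indep.subset_isBasis'_of_subset (hJ.subset.trans subset_union_right : J ⊆ S ∪ C)
  have hIC : (M ／ C).IsBasis' (I \ C) ((S ∪ C) \ C) :=
    hI.contract_isBasis' hJ (hI.indep.subset (union_subset sdiff_subset hJI))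
  have hIJ : I ∩ C = J := (hJ.eq_of_subset_indep (hI.indep.inter_right C)
    (subset_inter hJI hJ.subset) inter_subset_right).symm
  have hS : (M ／ C).eRk S = (M ／ C).eRk ((S ∪ C) \ C) := by
    rw [← eRk_inter_ground, ← eRk_inter_ground (X := (S ∪ C) \ C), contract_ground]
    congr 1
    tauto_set
  rw [hS, ← hIC.encard_eq_eRk, ← hI.encard_eq_eRk, ← hJ.encard_eq_eRk, ← hIJ,
    encard_sdiff_add_encard_inter]

lemma rankOf_contract_add_rankOf [M.RankFinite] (C S : Set α) :
    (M ／ C).rankOf S + M.rankOf C = M.rankOf (S ∪ C) := by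
  exact_mod_cast (congrArg₂ (· + ·) (cast_rankOf S) (cast_rankOf C)).trans
    ((M.eRk_contract_add_eRk C S).trans (cast_rankOf _).symm)

lemma rank_contract_add_rankOf [M.RankFinite] (C : Set α) :
    (M ／ C).rank + M.rankOf C = M.rank := by
  have h : M.rankOf (M.E ∪ C) = M.rank := by
    exact_mod_cast (cast_rankOf _).trans
      ((M.eRk_ground_union C).trans (M.eRank_def.trans (cast_rankOf _).symm))
  rw [rank, rankOf_contract_add_rankOf, contract_ground, sdiff_union_self, h]

lemma IsFlat.closure_subset_iff_subset {F : Set α} (hF : M.IsFlat F) (hS : S ⊆ M.E) :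
    M.closure S ⊆ F ↔ S ⊆ F := by
  rw [← hF.closure, closure_subset_closure_iff_subset_closure hS]

lemma IsFlat.union_subset_closure_union (hH : M.IsFlat H) (hS : S ⊆ M.E) :
    H ∪ S ⊆ M.closure (H ∪ S) :=
  M.subset_closure _ (union_subset hH.subset_ground hS)

variable [Fintype α]

lemma reflect_charPoly (N : Matroid α) :
    N.charPoly.reflect N.rank =
      ∑ A ∈ N.E.toFinset.powerset, (-1 : ℤ[X]) ^ A.card * X ^ N.rankOf ↑A := by
  rw [charPoly, Polynomial.reflect_sum]
  refine Finset.sum_congr rfl fun A _ => ?_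
  have hsign : (-1 : ℤ[X]) ^ A.card = C ((-1) ^ A.card) := by simp
  rw [hsign, reflect_C_mul, reflect_monomial, revAt_le (Nat.sub_le _ _),
    Nat.sub_sub_self (N.rankOf_le_rank _)]

lemma reflect_charPoly_restrict (F : Set α) :
    (M ↾ F).charPoly.reflect (M.rankOf F) =
      ∑ A ∈ F.toFinset.powerset, (-1 : ℤ[X]) ^ A.card * X ^ M.rankOf ↑A := by
  rw [← rank_restrict, reflect_charPoly]
  refine Finset.sum_congr rfl fun A hA => ?_
  rw [rankOf_restrict (by simpa using hA)]

lemma charPoly_contract (C : Set α) :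
    (M ／ C).charPoly = ∑ B ∈ (M.E \ C).toFinset.powerset,
      (-1 : ℤ[X]) ^ B.card * X ^ (M.rank - M.rankOf (↑B ∪ C)) := by
  refine Finset.sum_congr (by rw [Set.toFinset_congr (M.contract_ground C)]) fun B _ => ?_
  rw [← rank_contract_add_rankOf (M := M) C, ← rankOf_contract_add_rankOf (M := M) C,
    Nat.add_sub_add_right]

lemma sum_sum_powerset_comm_isFlat {R : Type*} [AddCommMonoid R]
    (g : Finset α → {F // M.IsFlat F} → R) :
    ∑ F, ∑ A ∈ F.1.toFinset.powerset, g A F =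
      ∑ A ∈ M.E.toFinset.powerset, ∑ F ∈ Finset.univ.filter (fun F => ↑A ⊆ F.1), g A F := by
  refine Finset.sum_comm' fun F A => ?_
  simp only [Finset.mem_powerset, Set.subset_toFinset, Finset.mem_filter, Finset.mem_univ,
    true_and]
  exact ⟨fun hA => ⟨hA, hA.trans F.2.subset_ground⟩, And.left⟩

noncomputable instance : LocallyFiniteOrder {F // M.IsFlat F} := Fintype.toLocallyFiniteOrder

variable {𝕜 : Type*} [Ring 𝕜]

lemma sum_Icc_sum_closure_eq_sum_powerset (H K : {F // M.IsFlat F}) (hHK : H ≤ K) :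
    ∑ K' ∈ Finset.Icc H K,
      ∑ B ∈ (M.E \ H.1).toFinset.powerset.filter (fun B : Finset α => M.closure (H.1 ∪ ↑B) = K'.1),
        (-1 : 𝕜) ^ B.card =
    ∑ B ∈ (K.1 \ H.1).toFinset.powerset, (-1 : 𝕜) ^ B.card := by
  have hKE := K.2.subset_ground
  have hmaps : ∀ B ∈ (K.1 \ H.1).toFinset.powerset,
      (⟨M.closure (H.1 ∪ ↑B), M.isFlat_closure _⟩ : {F // M.IsFlat F}) ∈ Finset.Icc H K := by
    intro B hB
    simp only [Finset.mem_powerset, Set.subset_toFinset, subset_sdiff] at hB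
    refine Finset.mem_Icc.2
      ⟨subset_union_left.trans (H.2.union_subset_closure_union (hB.1.trans hKE)), ?_⟩
    exact (K.2.closure_subset_iff_subset (union_subset H.2.subset_ground (hB.1.trans hKE))).2
      (union_subset hHK hB.1)
  rw [← Finset.sum_fiberwise_of_maps_to hmaps]
  refine Finset.sum_congr rfl fun K' hK' => Finset.sum_congr ?_ fun _ _ => rfl
  ext B
  simp only [Finset.mem_filter, Finset.mem_powerset, Set.subset_toFinset, subset_sdiff,
    Subtype.ext_iff]
  refine ⟨fun ⟨⟨hBE, hBH⟩, hcl⟩ => ⟨⟨?_, hBH⟩, hcl⟩,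
    fun ⟨⟨hBK, hBH⟩, hcl⟩ => ⟨⟨hBK.trans hKE, hBH⟩, hcl⟩⟩
  exact (subset_union_right.trans (H.2.union_subset_closure_union hBE)).trans
    (hcl ▸ (Finset.mem_Icc.1 hK').2)

lemma mu_eq_sum_closure (H K : {F // M.IsFlat F}) :
    IncidenceAlgebra.mu 𝕜 H K =
      ∑ B ∈ (M.E \ H.1).toFinset.powerset.filter (fun B : Finset α => M.closure (H.1 ∪ ↑B) = K.1),
        (-1 : 𝕜) ^ B.card := by
  let f : IncidenceAlgebra 𝕜 {F // M.IsFlat F} :=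
    ⟨fun H K => ∑ B ∈ (M.E \ H.1).toFinset.powerset.filter
        (fun B : Finset α => M.closure (H.1 ∪ ↑B) = K.1), (-1 : 𝕜) ^ B.card,
      fun H K hHK => Finset.sum_eq_zero fun B hB => by
        simp only [Finset.mem_filter, Finset.mem_powerset, Set.subset_toFinset,
          subset_sdiff] at hB
        exact (hHK (show H.1 ⊆ K.1 from
          hB.2 ▸ subset_union_left.trans (H.2.union_subset_closure_union hB.1.1))).elim⟩
  have hf : f * IncidenceAlgebra.zeta 𝕜 = 1 := by
    refine IncidenceAlgebra.ext fun H K hHK => ?_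
    rw [IncidenceAlgebra.mul_apply, IncidenceAlgebra.one_apply]
    rw [Finset.sum_congr rfl fun K' hK' => by
      rw [IncidenceAlgebra.zeta_of_le (Finset.mem_Icc.1 hK').2, mul_one]]
    refine (sum_Icc_sum_closure_eq_sum_powerset H K hHK).trans ?_
    rw [Finset.sum_powerset_neg_one_pow_card_of_ring]
    refine if_congr ?_ rfl rfl
    rw [Set.toFinset_eq_empty, sdiff_eq_empty]
    exact ⟨fun hKH => hHK.antisymm hKH, fun h => h ▸ subset_rfl⟩
  have hmu : f = IncidenceAlgebra.mu 𝕜 := by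
    rw [← one_mul (IncidenceAlgebra.mu 𝕜), ← hf, mul_assoc, IncidenceAlgebra.zeta_mul_mu,
      mul_one]
  rw [← hmu]
  rfl

lemma charPoly_contract_eq_sum_mu (F : {F // M.IsFlat F}) :
    (M ／ F.1).charPoly = ∑ K, IncidenceAlgebra.mu ℤ[X] F K * X ^ (M.rank - M.rankOf K.1) := by
  rw [charPoly_contract, ← Finset.sum_fiberwise _
    (fun B : Finset α => (⟨M.closure (F.1 ∪ ↑B), M.isFlat_closure _⟩ : {F // M.IsFlat F}))]
  refine Finset.sum_congr rfl fun K _ => ?_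
  rw [mu_eq_sum_closure, Finset.sum_mul]
  refine Finset.sum_congr (by simp only [Subtype.ext_iff]) fun B hB => ?_
  simp only [Finset.mem_filter] at hB
  rw [← hB.2, rankOf_closure, union_comm]

lemma sum_charPoly_contract_of_le (G : {F // M.IsFlat F}) :
    ∑ F ∈ Finset.univ.filter (G ≤ ·), (M ／ F.1).charPoly = X ^ (M.rank - M.rankOf G.1) := by
  simp_rw [charPoly_contract_eq_sum_mu]
  rw [Finset.sum_comm]
  simp_rw [← Finset.sum_mul, IncidenceAlgebra.sum_filter_le_mu_left, ite_mul, one_mul, zero_mul]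
  rw [Finset.sum_ite_eq]
  simp

lemma sum_charPoly_contract_of_subset {A : Set α} (hA : A ⊆ M.E) :
    ∑ F ∈ Finset.univ.filter (fun F : {F // M.IsFlat F} => A ⊆ F.1), (M ／ F.1).charPoly =
      X ^ (M.rank - M.rankOf A) := by
  have h := sum_charPoly_contract_of_le ⟨M.closure A, M.isFlat_closure A⟩
  rw [rankOf_closure] at h
  rw [← h]
  refine Finset.sum_congr (Finset.filter_congr fun F _ => ?_) fun _ _ => rfl
  exact (F.2.closure_subset_iff_subset hA).symm

end Matroid

/-- for any matroid `M` of positive rank,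
`∑_{F ∈ L} t^{rk F} χ_{M_F}(t⁻¹) χ_{M^F}(t) = 0`.  Here `M_F = M ↾ F` is the
localization, `M^F = M.con F` the restriction of the paper, and
`t^{rk F} χ_{M_F}(t⁻¹)` is the reflection of `χ_{M_F}` at degree `rk F`. -/
theorem sum_reflect_charPoly_mul_charPoly_con {α : Type} [Fintype α] (M : Matroid α)
    (h : 0 < M.rank) :
    ∑ F : {F : Set α // M.IsFlat F},
      ((M ↾ F.1).charPoly).reflect (M.rankOf F.1) * (M.con F.1).charPoly = 0 := by
  simp_rw [Matroid.reflect_charPoly_restrict, Matroid.con_eq_contract, Finset.sum_mul]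
  rw [Matroid.sum_sum_powerset_comm_isFlat
    (fun A F => (-1 : ℤ[X]) ^ A.card * X ^ M.rankOf ↑A * (M ／ F.1).charPoly)]
  calc _ = ∑ A ∈ M.E.toFinset.powerset,
        (-1 : ℤ[X]) ^ A.card * X ^ M.rankOf ↑A * X ^ (M.rank - M.rankOf ↑A) := by
        simp_rw [← Finset.mul_sum]
        refine Finset.sum_congr rfl fun A hA => ?_
        rw [Matroid.sum_charPoly_contract_of_subset (by simpa using hA)]
    _ = (∑ A ∈ M.E.toFinset.powerset, (-1 : ℤ[X]) ^ A.card) * X ^ M.rank := by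
        rw [Finset.sum_mul]
        refine Finset.sum_congr rfl fun A _ => ?_
        rw [mul_assoc, ← pow_add, Nat.add_sub_cancel' (M.rankOf_le_rank _)]
    _ = 0 := by
        rw [Finset.sum_powerset_neg_one_pow_card_of_ring, if_neg, zero_mul]
        exact (Set.toFinset_nonempty.2 (M.ground_nonempty_of_rank_pos h)).ne_empty
end

section
/- Define generating functions H(t,u,x) = Σ_{d≥1} Σ_{m≥0} χ_{U_{m,d}}(t) u^d x^m / (d+m)! where χ_{U_{m,d}}(t) = Σ_{i=0}^{d-1} (-1)^i C(m+d,i)(t^{d-i}−1). Then H(t,u,x) = (u/(u−x))(−1 + e^{x−u}) + (tu/(tu−x))(e^{tu−u} − e^{x−u}), and in particular 1 + H(t,u,0) = e^{tu−u}. -/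
open Polynomial

/-- The characteristic polynomial of the uniform matroid `U_{m,d}`:
`χ_{U_{m,d}}(t) = ∑_{i=0}^{d-1} (-1)^i C(m+d,i)(t^{d-i} - 1)`. -/
noncomputable def chiU (m d : ℕ) : Polynomial ℚ :=
  ∑ i ∈ Finset.range d,
    (-1 : Polynomial ℚ) ^ i * ((m + d).choose i : ℚ) • ((X : Polynomial ℚ) ^ (d - i) - 1)

/-- `H(t,u,x) = ∑_{d≥1} ∑_{m≥0} χ_{U_{m,d}}(t) u^d x^m / (d+m)!` as a formal
power series in the three variables `t, u, x` (variables `0, 1, 2`). -/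
noncomputable def Hgen : MvPowerSeries (Fin 3) ℚ := fun e =>
  if 1 ≤ e 1 then ((chiU (e 2) (e 1)).coeff (e 0)) / ((e 1 + e 2).factorial : ℚ) else 0

/-- `H(t,u,0) = ∑_{d≥1} χ_{U_{0,d}}(t) u^d / d!`. -/
noncomputable def Hgen0 : MvPowerSeries (Fin 3) ℚ := fun e =>
  if 1 ≤ e 1 ∧ e 2 = 0 then ((chiU 0 (e 1)).coeff (e 0)) / ((e 1).factorial : ℚ) else 0

/-- The exponential `e^{x-u}`. -/
noncomputable def expXU : MvPowerSeries (Fin 3) ℚ := fun e =>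
  if e 0 = 0 then (-1 : ℚ) ^ (e 1) / (((e 1).factorial : ℚ) * ((e 2).factorial : ℚ)) else 0

/-- The exponential `e^{tu-u}`. -/
noncomputable def expTUU : MvPowerSeries (Fin 3) ℚ := fun e =>
  if e 2 = 0 ∧ e 0 ≤ e 1 then
    ((e 1).choose (e 0) : ℚ) * (-1 : ℚ) ^ (e 1 - e 0) / ((e 1).factorial : ℚ)
  else 0

/-!
Reading off the coefficient of `t^a u^d x^m` from `χ_{U_{m,d}}` gives the closed forms
`(-1)^{d-a} / ((a+m)! (d-a)!)` for `a ≥ 1` and, through the alternating partial sums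
`∑_{i<d} (-1)^i C(n+1,i) = (-1)^{d-1} C(n,d-1)`, `(-1)^d / ((d-1)! m! (d+m))` for `a = 0`.
So `H` splits into its `t`-free part `Q₁` and the rest `Q₂`. Multiplying by `u - x`,
resp. `tu - x`, turns the two defining equations into two-term recurrences between these
closed forms, which hold coefficientwise. Putting `x = 0` leaves `∑_{a ≤ d} t^a u^d
(-1)^{d-a} / (a! (d-a)!) = e^{tu-u}`.
-/

open Finset Nat

theorem MvPowerSeries.coeff_X_mul_eq_ite {σ R : Type*} [CommSemiring R] [DecidableEq σ]
    (s : σ) (f : MvPowerSeries σ R) (n : σ →₀ ℕ) :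
    MvPowerSeries.coeff n (MvPowerSeries.X s * f) =
      if n s = 0 then 0 else MvPowerSeries.coeff (n - Finsupp.single s 1) f := by
  simp only [MvPowerSeries.X_def, MvPowerSeries.coeff_monomial_mul, one_mul, Finsupp.single_le_iff]
  split_ifs <;> first | rfl | omega

theorem chiU_coeff (m d a : ℕ) :
    (chiU m d).coeff a = ∑ i ∈ range d,
      (-1) ^ i * ((m + d).choose i : ℚ) * ((if a = d - i then 1 else 0) - if a = 0 then 1 else 0) := by
  simp only [chiU, finsetSum_coeff]
  refine sum_congr rfl fun i _ => ?_
  rw [Polynomial.smul_eq_C_mul, ← mul_assoc, show (-1 : ℚ[X]) ^ i = C ((-1) ^ i) by simp, ← C_mul,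
    coeff_C_mul]
  simp [coeff_X_pow, coeff_one]

theorem chiU_coeff_zero (m d : ℕ) :
    (chiU m (d + 1)).coeff 0 = (-1) ^ (d + 1) * ((m + d).choose d : ℚ) := by
  have h : ∑ i ∈ range (d + 1), (-1) ^ i * ((m + d + 1).choose i : ℚ) =
      (-1) ^ d * (m + d).choose d := by
    exact_mod_cast Int.alternating_sum_range_choose_eq_choose
  rw [chiU_coeff, ← add_assoc, pow_succ, mul_right_comm, mul_neg_one, ← h, ← sum_neg_distrib]
  refine sum_congr rfl fun i hi => ?_
  rw [if_neg (by simp at hi; omega), if_pos rfl]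
  ring

theorem chiU_coeff_of_ne_zero (m d a : ℕ) (ha : a ≠ 0) :
    (chiU m d).coeff a = if a ≤ d then (-1) ^ (d - a) * ((m + d).choose (d - a) : ℚ) else 0 := by
  rw [chiU_coeff]
  simp only [if_neg ha, sub_zero, mul_ite, mul_one, mul_zero]
  split_ifs with had
  · rw [sum_congr rfl fun i hi => if_congr (show a = d - i ↔ i = d - a by simp at hi; omega) rfl rfl,
      sum_ite_eq', if_pos (by simp; omega)]
  · exact sum_eq_zero fun i hi => if_neg (by omega)

namespace UniformMatroidSeries

def series3 (f : ℕ → ℕ → ℕ → ℚ) : MvPowerSeries (Fin 3) ℚ := fun e => f (e 0) (e 1) (e 2)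

@[simp] theorem coeff_series3 (f : ℕ → ℕ → ℕ → ℚ) (e : Fin 3 →₀ ℕ) :
    MvPowerSeries.coeff e (series3 f) = f (e 0) (e 1) (e 2) := rfl

theorem series3_add (f g : ℕ → ℕ → ℕ → ℚ) :
    series3 f + series3 g = series3 fun a d m => f a d m + g a d m := rfl

theorem series3_sub (f g : ℕ → ℕ → ℕ → ℚ) :
    series3 f - series3 g = series3 fun a d m => f a d m - g a d m := rfl

theorem one_eq_series3 :
    (1 : MvPowerSeries (Fin 3) ℚ) = series3 fun a d m => if a = 0 ∧ d = 0 ∧ m = 0 then 1 else 0 := by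
  ext e
  simp [MvPowerSeries.coeff_one, Finsupp.ext_iff, Fin.forall_fin_succ]

theorem X_zero_mul_series3 (f : ℕ → ℕ → ℕ → ℚ) :
    MvPowerSeries.X 0 * series3 f = series3 fun a d m => if a = 0 then 0 else f (a - 1) d m := by
  ext e
  simp [MvPowerSeries.coeff_X_mul_eq_ite]

theorem X_one_mul_series3 (f : ℕ → ℕ → ℕ → ℚ) :
    MvPowerSeries.X 1 * series3 f = series3 fun a d m => if d = 0 then 0 else f a (d - 1) m := by
  ext e
  simp [MvPowerSeries.coeff_X_mul_eq_ite]

theorem X_two_mul_series3 (f : ℕ → ℕ → ℕ → ℚ) :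
    MvPowerSeries.X 2 * series3 f = series3 fun a d m => if m = 0 then 0 else f a d (m - 1) := by
  ext e
  simp [MvPowerSeries.coeff_X_mul_eq_ite]

theorem expXU_eq_series3 :
    expXU = series3 fun a d m => if a = 0 then (-1) ^ d / (d ! * m !) else 0 := rfl

theorem expTUU_eq_series3 :
    expTUU = series3 fun a d m => if m = 0 ∧ a ≤ d then (-1) ^ (d - a) / (a ! * (d - a)!) else 0 := by
  funext e
  simp only [expTUU, series3]
  split_ifs with h
  · rw [Nat.cast_choose ℚ h.2]
    field_simp
  · rfl

/-- `q₁ a d m` and `q₂ a d m` are the coefficients of `t^a u^d x^m` in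
`u/(u-x) (e^{x-u} - 1)` and in `tu/(tu-x) (e^{tu-u} - e^{x-u})`. -/
def q₁ (a d m : ℕ) : ℚ :=
  if a = 0 ∧ d ≠ 0 then (-1) ^ d / ((d - 1)! * m ! * (d + m)) else 0

def q₂ (a d m : ℕ) : ℚ :=
  if a ≠ 0 ∧ a ≤ d then (-1) ^ (d - a) / ((a + m)! * (d - a)!) else 0

theorem chiU_coeff_div_factorial (a d m : ℕ) :
    (chiU m (d + 1)).coeff a / (d + 1 + m)! = q₁ a (d + 1) m + q₂ a (d + 1) m := by
  rcases a with _ | a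
  · rw [chiU_coeff_zero, Nat.cast_choose ℚ (by omega), q₁, if_pos ⟨rfl, d.succ_ne_zero⟩, q₂,
      if_neg (by omega), add_zero, show d + 1 + m = d + m + 1 by omega, factorial_succ,
      add_comm m d, Nat.add_sub_cancel_left, Nat.add_sub_cancel]
    push_cast
    field_simp
    ring
  · have hq₁ : q₁ (a + 1) (d + 1) m = 0 := if_neg (by omega)
    rw [chiU_coeff_of_ne_zero _ _ _ (by omega), hq₁, zero_add, q₂]
    by_cases had : a + 1 ≤ d + 1
    · rw [if_pos had, if_pos ⟨by omega, had⟩, Nat.cast_choose ℚ (by omega),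
        show m + (d + 1) - (d + 1 - (a + 1)) = a + 1 + m by omega, add_comm m]
      field_simp
    · rw [if_neg had, if_neg (by omega), zero_div]

theorem Hgen_eq_series3 : Hgen = series3 fun a d m => q₁ a d m + q₂ a d m := by
  funext e
  simp only [Hgen, series3]
  rcases e 1 with _ | d
  · simp [q₁, q₂]
  · simp [chiU_coeff_div_factorial]

theorem Hgen0_eq_series3 :
    Hgen0 = series3 fun a d m => if m = 0 then q₁ a d m + q₂ a d m else 0 := by
  funext e
  simp only [Hgen0, series3]
  rcases e 1 with _ | d
  · simp [q₁, q₂]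
  · split_ifs with hm <;> simp_all [← chiU_coeff_div_factorial]

theorem q₁_recurrence (d m : ℕ) :
    q₁ 0 d (m + 1) - q₁ 0 (d + 1) m = (-1 : ℚ) ^ d / (d ! * (m + 1)!) := by
  rcases d with _ | d <;> simp [q₁, factorial_succ] <;> field_simp <;> ring

theorem q₂_recurrence (a d m : ℕ) :
    q₂ a d (m + 1) - q₂ (a + 1) (d + 1) m =
      -if a = 0 then (-1 : ℚ) ^ d / (d ! * (m + 1)!) else 0 := by
  rcases a with _ | a
  · simp [q₂, add_comm 1 m, mul_comm]
  · simp [q₂, show a + 1 + (m + 1) = a + 1 + 1 + m by omega]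

theorem q₂_zero_right (a d : ℕ) :
    q₂ a d 0 = (if a ≤ d then (-1 : ℚ) ^ (d - a) / (a ! * (d - a)!) else 0) -
      if a = 0 then (-1 : ℚ) ^ d / d ! else 0 := by
  rcases a with _ | a <;> simp [q₂]

theorem X_one_sub_X_two_mul_series3_q₁ :
    (MvPowerSeries.X 1 - MvPowerSeries.X 2) * series3 q₁ = MvPowerSeries.X 1 * (expXU - 1) := by
  rw [sub_mul, X_one_mul_series3, X_two_mul_series3, expXU_eq_series3, one_eq_series3,
    series3_sub, series3_sub, X_one_mul_series3]
  congr 1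
  funext a d m
  rcases a with _ | a
  · rcases d with _ | d
    · simp [q₁]
    · rcases m with _ | m
      · rcases d with _ | d <;> simp [q₁, factorial_succ, mul_comm]
      · simp [q₁_recurrence]
  · simp [q₁]

theorem X_zero_mul_X_one_sub_X_two_mul_series3_q₂ :
    (MvPowerSeries.X 0 * MvPowerSeries.X 1 - MvPowerSeries.X 2) * series3 q₂ =
      MvPowerSeries.X 0 * MvPowerSeries.X 1 * (expTUU - expXU) := by
  rw [sub_mul, mul_assoc, mul_assoc, X_one_mul_series3, X_zero_mul_series3, X_two_mul_series3,
    expXU_eq_series3, expTUU_eq_series3, series3_sub, series3_sub, X_one_mul_series3,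
    X_zero_mul_series3]
  congr 1
  funext a d m
  rcases a with _ | a
  · rcases m with _ | m <;> simp [q₂]
  rcases d with _ | d
  · rcases m with _ | m <;> simp [q₂]
  rcases m with _ | m
  · simp [q₂_zero_right]
  · simp [q₂_recurrence]

theorem one_add_Hgen0 : 1 + Hgen0 = expTUU := by
  rw [one_eq_series3, Hgen0_eq_series3, expTUU_eq_series3, series3_add]
  congr 1
  funext a d m
  rcases a with _ | a <;> rcases d with _ | d <;> rcases m with _ | m <;> simp [q₁, q₂]
  push_cast [factorial_succ]
  field_simp

end UniformMatroidSeries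

/-- `H(t,u,x) = (u/(u-x))(-1 + e^{x-u}) + (tu/(tu-x))(e^{tu-u} - e^{x-u})`, where
`u/(u-x)` and `tu/(tu-x)` are interpreted via the geometric series; i.e. the two
summands are the (unique) power series `Q₁, Q₂` with
`(u-x) Q₁ = u (e^{x-u} - 1)` and `(tu-x) Q₂ = tu (e^{tu-u} - e^{x-u})`.
In particular `1 + H(t,u,0) = e^{tu-u}`. -/
theorem Hgen_eq :
    ∃ Q₁ Q₂ : MvPowerSeries (Fin 3) ℚ,
      (MvPowerSeries.X 1 - MvPowerSeries.X 2) * Q₁ =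
          MvPowerSeries.X 1 * (expXU - 1) ∧
      (MvPowerSeries.X 0 * MvPowerSeries.X 1 - MvPowerSeries.X 2) * Q₂ =
          MvPowerSeries.X 0 * MvPowerSeries.X 1 * (expTUU - expXU) ∧
      Hgen = Q₁ + Q₂ ∧
      1 + Hgen0 = expTUU :=
  open UniformMatroidSeries in
  ⟨series3 q₁, series3 q₂, X_one_sub_X_two_mul_series3_q₁,
    X_zero_mul_X_one_sub_X_two_mul_series3_q₂, by rw [Hgen_eq_series3, series3_add], one_add_Hgen0⟩
end

section
/- Fix n and i with 0 < i < n/2. For any partition λ = [q,p,2^k,1^ℓ] of n with q ≥ p ≥ 2, set u = max(p, n−2i), ω = 2(n−i−k)−ℓ, x = ⌊ω/2⌋, v_0 = min(q, n−i−k−1), v_1 = min(q, n−i−k), v_0' = min(q, n−i−k−2), v_1' = v_0. Then with c(λ,i,i) and c(λ,i−1,i+1) given by Remmel's formulas (zero if p+k > n−i resp. p+k > n−i−1; otherwise χ(u ≤ x−1 ≤ v_0) + χ(u ≤ x ≤ v_1) resp. χ(u ≤ x−1 ≤ v_0') + χ(u ≤ x ≤ v_1') for ℓ even, and χ(u ≤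 x ≤ v_0) + χ(u ≤ x ≤ v_1) resp. χ(u ≤ x ≤ v_0') + χ(u ≤ x ≤ v_1') for ℓ odd), one has c(λ,i,i) ≥ c(λ,i−1,i+1). -/
/-- `χ P` is `1` if `P` holds and `0` otherwise. -/
def chiInd (P : Prop) [Decidable P] : ℤ := if P then 1 else 0

/-- Remmel's formulas and the inequality
`c(λ, i, i) ≥ c(λ, i-1, i+1)` for a partition `λ = [q, p, 2^k, 1^ℓ]` of `n`
with `q ≥ p ≥ 2`, where `0 < i < n/2`.  Here
`u = max(p, n-2i)`, `ω = 2(n-i-k)-ℓ`, `x = ⌊ω/2⌋ = (n-i-k) - ⌈ℓ/2⌉`,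
`v₀ = min(q, n-i-k-1)`, `v₁ = min(q, n-i-k)`, `v₀' = min(q, n-i-k-2)`,
`v₁' = v₀`. -/
theorem remmel_inequality (n i q p k ℓ : ℕ)
    (hi : 0 < i) (hin : 2 * i < n) (hp : 2 ≤ p) (hpq : p ≤ q)
    (hpart : q + p + 2 * k + ℓ = n) :
    letI u : ℤ := max (p : ℤ) ((n : ℤ) - 2 * i)
    letI x : ℤ := (n : ℤ) - i - k - (((ℓ + 1) / 2 : ℕ) : ℤ)
    letI v0 : ℤ := min (q : ℤ) ((n : ℤ) - i - k - 1)
    letI v1 : ℤ := min (q : ℤ) ((n : ℤ) - i - k)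
    letI v0' : ℤ := min (q : ℤ) ((n : ℤ) - i - k - 2)
    letI v1' : ℤ := v0
    letI c₁ : ℤ :=
      if (n : ℤ) - i < (p : ℤ) + k then 0
      else if Even ℓ then
        chiInd (u ≤ x - 1 ∧ x - 1 ≤ v0) + chiInd (u ≤ x ∧ x ≤ v1)
      else
        chiInd (u ≤ x ∧ x ≤ v0) + chiInd (u ≤ x ∧ x ≤ v1)
    letI c₂ : ℤ :=
      if (n : ℤ) - i - 1 < (p : ℤ) + k then 0
      else if Even ℓ then
        chiInd (u ≤ x - 1 ∧ x - 1 ≤ v0') + chiInd (u ≤ x ∧ x ≤ v1')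
      else
        chiInd (u ≤ x ∧ x ≤ v0') + chiInd (u ≤ x ∧ x ≤ v1')
    c₂ ≤ c₁ := by
  have hev : Even ℓ ↔ ℓ % 2 = 0 := Nat.even_iff
  simp only [chiInd, le_min_iff, min_le_iff, le_max_iff, max_le_iff, hev]
  split_ifs <;> push_cast at * <;> omega
end
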